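/- A partition μ is in Q_{-1} if and only if μ can be written in Frobenius notation as (a_1, ..., a_r | a_1 + 1, ..., a_r + 1) for some strictly decreasing nonnegative integers a_1 > a_2 > ... > a_r ≥ 0; that is, the arm lengths along the diagonal are each one less than the corresponding leg lengths. -/

import Mathlib

open scoped BigOperators

/-- A partition: a weakly decreasing sequence of natural numbers with finitely many
nonzero terms. `parts` is 0-indexed: the `i`-th part is `parts i`. -/
def Partition' : Type := {f : ℕ → ℕ // Antitone f ∧ ∃ N, ∀ n, N ≤ n → f n = 0}

namespace Partition'

def parts (μ : Partition') : ℕ → ℕ := μ.1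

lemma parts_antitone (μ : Partition') : Antitone μ.parts := μ.2.1

@[ext] lemma ext {μ ν : Partition'} (h : ∀ n, μ.parts n = ν.parts n) : μ = ν :=
  Subtype.ext (funext h)

/-- The number of boxes of a partition. -/
noncomputable def size (μ : Partition') : ℕ := ∑ᶠ n, μ.parts n

/-- The number of nonzero parts of a partition. -/
noncomputable def length (μ : Partition') : ℕ := Set.ncard {n | μ.parts n ≠ 0}

/-- The transpose (conjugate) partition: `(transpose μ).parts i = #{j | μ.parts j ≥ i+1}`
(0-indexed; in 1-indexed terms, `μ†_i = #{j | μ_j ≥ i}`). -/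
noncomputable def transpose (μ : Partition') : Partition' :=
  ⟨fun i => Set.ncard {j | i < μ.parts j},
   by
    intro a b hab
    apply Set.ncard_le_ncard
    · intro j hj
      exact lt_of_le_of_lt hab hj
    · obtain ⟨N, hN⟩ := μ.2.2
      apply Set.Finite.subset (Set.finite_Iio N)
      intro j hj
      by_contra hjN
      simp only [Set.mem_Iio, not_lt] at hjN
      have h0 : μ.parts j = 0 := hN j hjN
      simp only [Set.mem_setOf_eq, h0] at hj
      omega,
   by
    refine ⟨μ.parts 0, fun n hn => ?_⟩
    convert Set.ncard_empty ℕ using 2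
    ext j
    simp only [Set.mem_setOf_eq, Set.mem_empty_iff_false, iff_false, not_lt]
    exact le_trans (μ.parts_antitone (Nat.zero_le j)) hn⟩

/-- Containment of Young diagrams. -/
def Sub (μ lam : Partition') : Prop := ∀ i, μ.parts i ≤ lam.parts i

/-- The empty partition. -/
def empty : Partition' := ⟨fun _ => 0, fun _ _ _ => le_rfl, ⟨0, fun _ _ => rfl⟩⟩

/-- One-row partition `(k)`. -/
def rowP (k : ℕ) : Partition' :=
  ⟨fun n => if n = 0 then k else 0,
   by intro a b hab; dsimp only; split <;> split <;> omega,
   ⟨1, fun n hn => by dsimp only; split <;> omega⟩⟩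

/-- One-column partition `(1^k)`. -/
def colP (k : ℕ) : Partition' :=
  ⟨fun n => if n < k then 1 else 0,
   by intro a b hab; dsimp only; split <;> split <;> omega,
   ⟨k, fun n hn => by dsimp only; split <;> omega⟩⟩

/-- The partition obtained by deleting the first row and the first column:
`(μ_2 - 1, μ_3 - 1, ...)`. -/
def frc (μ : Partition') : Partition' :=
  ⟨fun n => μ.parts (n + 1) - 1,
   fun a b hab => Nat.sub_le_sub_right (μ.parts_antitone (by omega)) 1,
   by
    obtain ⟨N, hN⟩ := μ.2.2
    exact ⟨N, fun n hn => by
      have h0 : μ.parts (n + 1) = 0 := hN (n + 1) (by omega)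
      dsimp only; omega⟩⟩

/-- The partition with all parts doubled: `2η = (2η_1, 2η_2, ...)`. -/
def double (η : Partition') : Partition' :=
  ⟨fun n => 2 * η.parts n,
   fun a b hab => by have := η.parts_antitone hab; dsimp only; omega,
   by
    obtain ⟨N, hN⟩ := η.2.2
    exact ⟨N, fun n hn => by
      have h0 : η.parts n = 0 := hN n hn
      dsimp only; omega⟩⟩

/-- The set `Q_{-1}` of partitions: the empty partition is in `Q_{-1}`, and a
(nonempty) partition `μ` is in `Q_{-1}` iff `ℓ(μ) = μ_1 + 1` and deleting the first
row and column of `μ` gives a partition in `Q_{-1}`. -/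
inductive Qneg : Partition' → Prop
  | empty : Qneg Partition'.empty
  | step (μ : Partition') (h : μ.length = μ.parts 0 + 1) (h' : Qneg μ.frc) : Qneg μ

/-- The set `Q_1`: partitions whose transpose lies in `Q_{-1}`. -/
def Qpos (μ : Partition') : Prop := Qneg μ.transpose

end Partition'

/-- The ring of symmetric functions `Λ = ℤ[e_1, e_2, ...]`, a polynomial ring in the
elementary symmetric functions. -/
abbrev SymF := MvPolynomial ℕ ℤ

/-- The elementary symmetric function `e_k`, extended by `e_k = 0` for `k < 0` and
`e_0 = 1`. The variable `X n` of `SymF` is `e_{n+1}`. -/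
noncomputable def eZ : ℤ → SymF := fun k =>
  if k < 0 then 0 else if k = 0 then 1 else MvPolynomial.X (k.toNat - 1)

/-- The Schur function `s_ν`, defined via the dual Jacobi–Trudi determinant
`s_ν = det(e_{ν†_i - i + j})`. -/
noncomputable def schur (ν : Partition') : SymF :=
  Matrix.det (Matrix.of fun i j : Fin (ν.parts 0) =>
    eZ ((ν.transpose.parts i : ℤ) - (i : ℤ) + (j : ℤ)))



namespace Partition'

lemma transpose_finite (μ : Partition') (i : ℕ) : {j | i < μ.parts j}.Finite := by
  obtain ⟨N, hN⟩ := μ.2.2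
  apply Set.Finite.subset (Set.finite_Iio N)
  intro j hj
  by_contra hjN
  simp only [Set.mem_Iio, not_lt] at hjN
  have h0 : μ.parts j = 0 := hN j hjN
  simp only [Set.mem_setOf_eq, h0] at hj
  omega

lemma lt_transpose_iff (μ : Partition') (i j : ℕ) :
    j < μ.transpose.parts i ↔ i < μ.parts j := by
  have hdef : μ.transpose.parts i = Set.ncard {k | i < μ.parts k} := rfl
  constructor
  · intro h
    by_contra hj
    push_neg at hj
    have hsub : {k | i < μ.parts k} ⊆ Set.Iio j := by
      intro k hk
      simp only [Set.mem_setOf_eq] at hk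
      by_contra hkj
      simp only [Set.mem_Iio, not_lt] at hkj
      have := μ.parts_antitone hkj
      omega
    have := Set.ncard_le_ncard hsub (Set.finite_Iio j)
    have hIio : (Set.Iio j).ncard = j := by simp [Set.ncard_eq_toFinset_card']
    omega
  · intro h
    have hsub : Set.Iic j ⊆ {k | i < μ.parts k} := by
      intro k hk
      simp only [Set.mem_Iic] at hk
      have := μ.parts_antitone hk
      simp only [Set.mem_setOf_eq]
      omega
    have := Set.ncard_le_ncard hsub (μ.transpose_finite i)
    have hIic : (Set.Iic j).ncard = j + 1 := by simp [Set.ncard_eq_toFinset_card']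
    omega

lemma length_eq_transpose_zero (μ : Partition') :
    μ.length = μ.transpose.parts 0 := by
  have h : {n | μ.parts n ≠ 0} = {j | 0 < μ.parts j} := by
    ext k; simp [Nat.pos_iff_ne_zero]
  show Set.ncard {n | μ.parts n ≠ 0} = Set.ncard {j | 0 < μ.parts j}
  rw [h]

lemma frc_transpose_parts (μ : Partition') (i : ℕ) :
    μ.frc.transpose.parts i = μ.transpose.parts (i + 1) - 1 := by
  have key : ∀ j, j < μ.frc.transpose.parts i ↔ j + 1 < μ.transpose.parts (i + 1) := by
    intro j
    rw [lt_transpose_iff, lt_transpose_iff]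
    show i < μ.parts (j + 1) - 1 ↔ i + 1 < μ.parts (j + 1)
    omega
  have h1 := key (μ.frc.transpose.parts i)
  have h2 := key (μ.transpose.parts (i + 1) - 1)
  omega

end Partition'

/-- `μ ∈ Q_{-1}` iff in Frobenius notation `μ = (a_1,…,a_r | a_1+1,…,a_r+1)`,
i.e. for every diagonal box `(i,i)` of `μ` (0-indexed: `i < μ.parts i`), the leg length
exceeds the arm length by one, i.e. `μ†_i = μ_i + 1`. -/
theorem Qneg_iff_frobenius (μ : Partition') :
    Partition'.Qneg μ ↔ ∀ i, i < μ.parts i → μ.transpose.parts i = μ.parts i + 1 := by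
  constructor
  · intro h
    induction h with
    | empty =>
      intro i hi
      exact absurd hi (by show ¬ i < 0; omega)
    | step ν h h' ih =>
      intro i hi
      match i with
      | 0 =>
        rw [← Partition'.length_eq_transpose_zero]
        exact h
      | k + 1 =>
        have hfp : ν.frc.parts k = ν.parts (k + 1) - 1 := rfl
        have hd : k < ν.frc.parts k := by omega
        have hih := ih k hd
        rw [Partition'.frc_transpose_parts] at hih
        have hpos : k + 1 < ν.transpose.parts (k + 1) :=
          (Partition'.lt_transpose_iff ν (k + 1) (k + 1)).2 hi
        omega
  · have key : ∀ n ν, Partition'.parts ν 0 ≤ n →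
        (∀ i, i < Partition'.parts ν i → ν.transpose.parts i = Partition'.parts ν i + 1) →
        Partition'.Qneg ν := by
      intro n
      induction n with
      | zero =>
        intro ν h0 _
        have hν : ν = Partition'.empty := by
          apply Partition'.ext
          intro k
          have := ν.parts_antitone (Nat.zero_le k)
          show Partition'.parts ν k = 0
          omega
        rw [hν]
        exact Partition'.Qneg.empty
      | succ n IH =>
        intro ν h0 H
        by_cases hz : Partition'.parts ν 0 = 0
        · have hν : ν = Partition'.empty := by
            apply Partition'.ext
            intro k
            have := ν.parts_antitone (Nat.zero_le k)
            show Partition'.parts ν k = 0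
            omega
          rw [hν]
          exact Partition'.Qneg.empty
        · refine Partition'.Qneg.step ν ?_ ?_
          · rw [Partition'.length_eq_transpose_zero]
            exact H 0 (by omega)
          · apply IH
            · show Partition'.parts ν 1 - 1 ≤ n
              have := ν.parts_antitone (show 0 ≤ 1 by omega)
              omega
            · intro k hk
              have hfp : ν.frc.parts k = Partition'.parts ν (k + 1) - 1 := rfl
              have hk' : k + 1 < Partition'.parts ν (k + 1) := by omega
              have hH := H (k + 1) hk'
              rw [Partition'.frc_transpose_parts]
              omega
    intro H
    exact key (Partition'.parts μ 0) μ le_rfl H
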